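/- Let B be ℂ³ with basis x, y, z and bilinear multiplication whose only nonzero products of basis elements are z·x = y, z·y = y, and z·z = x (this makes B a Leibniz algebra). Then every t = c₁x + c₂y + c₃z with c₃ ≠ 0 and c₁ + c₂ + c₃ ≠ 0 satisfies that {t, t², t³} is linearly independent; in particular B is cyclic. -/

import Mathlib

/-- `lpow μ x k` is the left-normed power `x^(k+1)`; so `lpow μ x 0 = x`,
`lpow μ x 1 = x·x = x²`, `lpow μ x 2 = x·x² = x³`, etc. -/
def lpow {A : Type*} [AddCommGroup A] [Module ℂ A]
    (μ : A →ₗ[ℂ] A →ₗ[ℂ] A) (x : A) : ℕ → A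
  | 0 => x
  | n + 1 => μ x (lpow μ x n)
/-- The algebra B = ℂ³ with basis x = e₀, y = e₁, z = e₂ whose only nonzero products
of basis elements are z·x = y, z·y = y, z·z = x; thus u·v = u₂ • L_z(v) with
L_z(x) = y, L_z(y) = y, L_z(z) = x. -/
noncomputable def mulB : (Fin 3 → ℂ) →ₗ[ℂ] (Fin 3 → ℂ) →ₗ[ℂ] (Fin 3 → ℂ) :=
  (LinearMap.proj 2).smulRight (Matrix.mulVecLin !![0,0,1;1,1,0;0,0,0])

noncomputable def xB : Fin 3 → ℂ := ![1,0,0]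
noncomputable def yB : Fin 3 → ℂ := ![0,1,0]
noncomputable def zB : Fin 3 → ℂ := ![0,0,1]

/-! In coordinates `t = (c₁, c₂, c₃)` one finds `t² = c₃ (c₃, c₁ + c₂, 0)` and
`t³ = c₃² (c₁ + c₂ + c₃) y`, so the matrix with rows `t, t², t³` has determinant
`c₃⁵ (c₁ + c₂ + c₃)`. For `t = x + z` this is nonzero, so `t, t², t³` is a basis. -/

theorem exists_basis_lpow_of_linearIndependent {A : Type*} [AddCommGroup A] [Module ℂ A]
    {n : ℕ} [NeZero n] (μ : A →ₗ[ℂ] A →ₗ[ℂ] A) (t : A)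
    (hli : LinearIndependent ℂ fun i : Fin n => lpow μ t i) (hn : Module.finrank ℂ A = n) :
    ∃ e : Module.Basis (Fin n) ℂ A, ∀ i : Fin n, e i = lpow μ t i :=
  ⟨basisOfLinearIndependentOfCardEqFinrank hli (by simp [hn]), fun i => by
    rw [coe_basisOfLinearIndependentOfCardEqFinrank]⟩

theorem smul_xB_add_smul_yB_add_smul_zB (c₁ c₂ c₃ : ℂ) :
    c₁ • xB + c₂ • yB + c₃ • zB = ![c₁, c₂, c₃] := by
  ext i; fin_cases i <;> simp [xB, yB, zB]

theorem mulB_apply (u v : Fin 3 → ℂ) : mulB u v = u 2 • ![v 2, v 0 + v 1, 0] := by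
  ext i; fin_cases i <;> simp [mulB, dotProduct, Fin.sum_univ_three]

theorem lpow_mulB_one (c₁ c₂ c₃ : ℂ) :
    lpow mulB ![c₁, c₂, c₃] 1 = ![c₃ * c₃, c₃ * (c₁ + c₂), 0] := by
  rw [lpow, lpow, mulB_apply]
  ext i; fin_cases i <;> simp

theorem lpow_mulB_two (c₁ c₂ c₃ : ℂ) :
    lpow mulB ![c₁, c₂, c₃] 2 = ![0, c₃ * c₃ * (c₁ + c₂ + c₃), 0] := by
  rw [lpow, lpow_mulB_one, mulB_apply]
  ext i; fin_cases i <;> simp; ring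

theorem det_lpow_mulB (c₁ c₂ c₃ : ℂ) :
    (Matrix.of ![![c₁, c₂, c₃], lpow mulB ![c₁, c₂, c₃] 1, lpow mulB ![c₁, c₂, c₃] 2]).det
      = c₃ ^ 5 * (c₁ + c₂ + c₃) := by
  rw [lpow_mulB_one, lpow_mulB_two, Matrix.det_fin_three]
  simp; ring

theorem linearIndependent_lpow_mulB {c₁ c₂ c₃ : ℂ} (h₃ : c₃ ≠ 0) (hs : c₁ + c₂ + c₃ ≠ 0) :
    LinearIndependent ℂ
      ![![c₁, c₂, c₃], lpow mulB ![c₁, c₂, c₃] 1, lpow mulB ![c₁, c₂, c₃] 2] := by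
  refine Matrix.linearIndependent_rows_of_det_ne_zero
    (A := Matrix.of ![![c₁, c₂, c₃], lpow mulB ![c₁, c₂, c₃] 1, lpow mulB ![c₁, c₂, c₃] 2]) ?_
  rw [det_lpow_mulB]
  exact mul_ne_zero (pow_ne_zero 5 h₃) hs

/-- Every t = c₁x + c₂y + c₃z with c₃ ≠ 0 and c₁ + c₂ + c₃ ≠ 0 has
{t, t², t³} linearly independent; in particular B is cyclic. -/
theorem algebraB_class7_cyclic :
    (∀ c₁ c₂ c₃ : ℂ, c₃ ≠ 0 → c₁ + c₂ + c₃ ≠ 0 →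
      LinearIndependent ℂ
        ![c₁ • xB + c₂ • yB + c₃ • zB,
          lpow mulB (c₁ • xB + c₂ • yB + c₃ • zB) 1,
          lpow mulB (c₁ • xB + c₂ • yB + c₃ • zB) 2]) ∧
    (∃ t : Fin 3 → ℂ, ∃ e : Module.Basis (Fin 3) ℂ (Fin 3 → ℂ),
        ∀ i : Fin 3, e i = lpow mulB t (i : ℕ)) := by
  refine ⟨fun c₁ c₂ c₃ h₃ hs => ?_, ![1, 0, 1], ?_⟩
  · rw [smul_xB_add_smul_yB_add_smul_zB]
    exact linearIndependent_lpow_mulB h₃ hs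
  · refine exists_basis_lpow_of_linearIndependent mulB _ ?_ (by simp)
    have hpowers : (fun i : Fin 3 => lpow mulB ![1, 0, 1] i) =
        ![![1, 0, 1], lpow mulB ![1, 0, 1] 1, lpow mulB ![1, 0, 1] 2] := by
      ext i : 1; fin_cases i <;> rfl
    rw [hpowers]
    exact linearIndependent_lpow_mulB one_ne_zero (by norm_num)
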